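/- Let C_L be a nonzero purely imaginary quaternion and C ∈ ℍ, and let α(λ) = −C_L⁻¹ · (1 − exp(λ C_L)) · C. Then for all λ ∈ ℝ, ‖α(λ)‖² = (‖C‖² / ‖C_L‖²) · (2 − 2 cos(‖C_L‖ λ)). -/

import Mathlib

open Quaternion

theorem Quaternion.normSq_one_sub {R : Type*} [CommRing R] (q : ℍ[R]) :
    normSq (1 - q) = 1 - 2 * q.re + normSq q := by
  simp only [normSq_def', re_sub, imI_sub, imJ_sub, imK_sub, re_one, imI_one, imJ_one, imK_one]
  ring

/-- Since `exp q` is a unit quaternion with real part `cos ‖q‖`, this is the law of cosines. -/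
theorem Quaternion.norm_one_sub_exp_sq_of_re_eq_zero {q : ℍ[ℝ]} (hq : q.re = 0) :
    ‖1 - NormedSpace.exp q‖ ^ 2 = 2 - 2 * Real.cos ‖q‖ := by
  rw [sq, ← normSq_eq_norm_mul_self, normSq_one_sub, normSq_exp, re_exp, hq,
    coe_zero, sub_zero, NormedSpace.exp_zero]
  ring

theorem Real.cos_norm_smul {E : Type*} [SeminormedAddCommGroup E] [NormedSpace ℝ E]
    (l : ℝ) (x : E) : Real.cos ‖l • x‖ = Real.cos (‖x‖ * l) := by
  rw [norm_smul, Real.norm_eq_abs, ← Real.cos_abs (‖x‖ * l), abs_mul, abs_norm, mul_comm]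

theorem quaternionic_geodesic_norm_sq
    (CL C : ℍ[ℝ]) (him : CL.re = 0)
    (α : ℝ → ℍ[ℝ])
    (hα : α = fun l => -(CL⁻¹ * ((1 - NormedSpace.exp (l • CL)) * C))) :
    ∀ l : ℝ, ‖α l‖ ^ 2 = ‖C‖ ^ 2 / ‖CL‖ ^ 2 * (2 - 2 * Real.cos (‖CL‖ * l)) := by
  intro l
  have hre : (l • CL).re = 0 := by simp [him]
  subst hα
  simp only [norm_neg, norm_mul, norm_inv, mul_pow, inv_pow]
  rw [norm_one_sub_exp_sq_of_re_eq_zero hre, Real.cos_norm_smul]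
  ring
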